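/- arXiv:2109.13594 — 4 statements merged into one kernel-verified Lean document; each statement's English description precedes it below -/
import Mathlib

section
/- Every multiqubit Kochen–Specker set necessarily contains an entangled ray. Precisely: for every n ≥ 1 and every set S of product unit vectors in (ℂ²)^{⊗n}, there exists a KS-colouring of S; consequently, no set of unit vectors consisting entirely of product vectors can be a KS set, so any KS set in (ℂ²)^{⊗n} contains at least one non-product (entangled) vector. -/
open scoped InnerProductSpace
open MeasureTheory

noncomputable section

abbrev Qubit : Type := EuclideanSpace ℂ (Fin 2)
abbrev NQubit (n : ℕ) : Type := EuclideanSpace ℂ (Fin n → Fin 2)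

/-- The product vector `ψ₁ ⊗ ⋯ ⊗ ψₙ` in `(ℂ²)^{⊗n}`, modelled concretely as
`EuclideanSpace ℂ (Fin n → Fin 2)`; its inner products satisfy
`⟨tens ψ, tens χ⟩ = ∏ j, ⟨ψ j, χ j⟩`. -/
noncomputable def tens {n : ℕ} (ψ : Fin n → Qubit) : NQubit n :=
  WithLp.toLp 2 (fun f => ∏ j, ψ j (f j))

/-- A vector of `(ℂ²)^{⊗n}` is a product vector if it is of the form `ψ₁ ⊗ ⋯ ⊗ ψₙ`. -/
def IsProduct {n : ℕ} (v : NQubit n) : Prop := ∃ ψ : Fin n → Qubit, v = tens ψ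

/-- A finite set of vectors forming an orthonormal basis of `H`. -/
def IsONBasis {H : Type*} [NormedAddCommGroup H] [InnerProductSpace ℂ H]
    (B : Finset H) : Prop :=
  Orthonormal ℂ (fun v : B => (v : H)) ∧ Submodule.span ℂ (B : Set H) = ⊤

/-- A KS-colouring of a set `S` of unit vectors: a `{0,1}`-valued map (modelled as a
predicate, `c v` meaning value `1`) such that every orthonormal basis contained in `S`
has exactly one element of value `1`, and no two mutually orthogonal elements of `S`
both have value `1`. -/
def IsKSColouring {H : Type*} [NormedAddCommGroup H] [InnerProductSpace ℂ H]
    (S : Set H) (c : H → Prop) : Prop :=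
  (∀ B : Finset H, ↑B ⊆ S → IsONBasis B → ∃! v, v ∈ B ∧ c v) ∧
  (∀ ψ ∈ S, ∀ χ ∈ S, ⟪ψ, χ⟫_ℂ = 0 → ¬(c ψ ∧ c χ))

/-! Orthogonal qubit rays have antipodal Bloch vectors, so the rays whose Bloch vector is
lexicographically positive contain exactly one ray of every orthogonal pair. Colour a product
vector 1 when it factors into such rays. Orthogonal product vectors are orthogonal in some
factor, so no two of them are coloured; and the `2 ^ n` members of an orthonormal product basis
have pairwise distinct colour patterns in `{0,1}ⁿ`, so exactly one of them has the all-ones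
pattern. -/

open scoped ComplexConjugate

namespace Qubit

lemma norm_sq_eq (ψ : Qubit) : ‖ψ‖ ^ 2 = ‖ψ 0‖ ^ 2 + ‖ψ 1‖ ^ 2 := by
  rw [EuclideanSpace.norm_sq_eq, Fin.sum_univ_two]

lemma inner_eq (ψ χ : Qubit) : ⟪ψ, χ⟫_ℂ = conj (ψ 0) * χ 0 + conj (ψ 1) * χ 1 := by
  simp [PiLp.inner_apply, Fin.sum_univ_two, mul_comm]

def stokesVector (ψ : Qubit) : Fin 3 → ℝ :=
  ![2 * (conj (ψ 0) * ψ 1).re, 2 * (conj (ψ 0) * ψ 1).im, ‖ψ 0‖ ^ 2 - ‖ψ 1‖ ^ 2]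

def blochVector (ψ : Qubit) : Fin 3 → ℝ := (‖ψ‖ ^ 2)⁻¹ • stokesVector ψ

lemma norm_sq_smul_stokesVector_eq_neg {ψ χ : Qubit} (h : ⟪ψ, χ⟫_ℂ = 0) :
    ‖ψ‖ ^ 2 • stokesVector χ = -(‖χ‖ ^ 2 • stokesVector ψ) := by
  have h' : ψ 0 * conj (χ 0) + ψ 1 * conj (χ 1) = 0 := by
    simpa [inner_eq] using congrArg conj h
  rw [inner_eq] at h
  have hoff : ((‖ψ‖ ^ 2 : ℝ) : ℂ) * (conj (χ 0) * χ 1)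
      = -(((‖χ‖ ^ 2 : ℝ) : ℂ) * (conj (ψ 0) * ψ 1)) := by
    rw [norm_sq_eq, norm_sq_eq]
    push_cast
    simp only [← Complex.mul_conj']
    linear_combination (conj (ψ 0) * χ 1) * h' + (ψ 1 * conj (χ 0)) * h
  have hdiag : ‖ψ‖ ^ 2 * (‖χ 0‖ ^ 2 - ‖χ 1‖ ^ 2) = -(‖χ‖ ^ 2 * (‖ψ 0‖ ^ 2 - ‖ψ 1‖ ^ 2)) := by
    rw [norm_sq_eq, norm_sq_eq]
    apply Complex.ofReal_injective
    push_cast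
    simp only [← Complex.mul_conj']
    linear_combination (2 * ψ 0 * conj (χ 0)) * h - 2 * (conj (ψ 1) * χ 1) * h'
  have hre := congrArg Complex.re hoff
  have him := congrArg Complex.im hoff
  rw [Complex.re_ofReal_mul, Complex.neg_re, Complex.re_ofReal_mul] at hre
  rw [Complex.im_ofReal_mul, Complex.neg_im, Complex.im_ofReal_mul] at him
  simp only [stokesVector, Matrix.smul_cons, Matrix.neg_cons, Matrix.smul_empty,
    Matrix.neg_empty, smul_eq_mul]
  congr 1
  · linear_combination 2 * hre
  congr 1
  · linear_combination 2 * him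
  rw [hdiag]

lemma blochVector_eq_neg_of_inner_eq_zero {ψ χ : Qubit} (hψ : ψ ≠ 0) (hχ : χ ≠ 0)
    (h : ⟪ψ, χ⟫_ℂ = 0) : blochVector χ = -blochVector ψ := by
  have hN : ‖ψ‖ ^ 2 ≠ 0 := by positivity
  have hM : ‖χ‖ ^ 2 ≠ 0 := by positivity
  rw [blochVector, blochVector, inv_smul_eq_iff₀ hM, smul_neg, smul_comm (‖χ‖ ^ 2), ← smul_neg,
    eq_comm, inv_smul_eq_iff₀ hN, norm_sq_smul_stokesVector_eq_neg h]

lemma blochVector_ne_zero {ψ : Qubit} (hψ : ψ ≠ 0) : blochVector ψ ≠ 0 := by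
  have hN : ‖ψ‖ ^ 2 ≠ 0 := by positivity
  intro h0
  have hs : stokesVector ψ = 0 := by
    rwa [blochVector, smul_eq_zero_iff_right (inv_ne_zero hN)] at h0
  have hcoh : conj (ψ 0) * ψ 1 = 0 := by
    apply Complex.ext
    · simpa [stokesVector] using congrFun hs 0
    · simpa [stokesVector] using congrFun hs 1
  have hpop : ‖ψ 0‖ ^ 2 = ‖ψ 1‖ ^ 2 :=
    sub_eq_zero.mp (by simpa [stokesVector] using congrFun hs 2)
  have hprod : ‖ψ 0‖ * ‖ψ 1‖ = 0 := by simpa using congrArg norm hcoh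
  apply hN
  rw [norm_sq_eq]
  nlinarith [norm_nonneg (ψ 0), norm_nonneg (ψ 1)]

def IsBlochPositive (ψ : Qubit) : Prop := 0 < toLex (blochVector ψ)

lemma IsBlochPositive.ne_zero {ψ : Qubit} (h : IsBlochPositive ψ) : ψ ≠ 0 := by
  rintro rfl
  rw [IsBlochPositive, show blochVector 0 = 0 by simp [blochVector], toLex_zero] at h
  exact lt_irrefl _ h

lemma isBlochPositive_iff_not_of_inner_eq_zero {ψ χ : Qubit} (hψ : ψ ≠ 0) (hχ : χ ≠ 0)
    (h : ⟪ψ, χ⟫_ℂ = 0) : IsBlochPositive χ ↔ ¬ IsBlochPositive ψ := by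
  rw [IsBlochPositive, IsBlochPositive, blochVector_eq_neg_of_inner_eq_zero hψ hχ h, toLex_neg,
    neg_pos]
  have hne : toLex (blochVector ψ) ≠ 0 := blochVector_ne_zero hψ
  exact ⟨fun hneg hpos => lt_asymm hneg hpos, (lt_or_gt_of_ne hne).resolve_right⟩

end Qubit

open Qubit

lemma inner_tens {n : ℕ} (ψ χ : Fin n → Qubit) :
    ⟪tens ψ, tens χ⟫_ℂ = ∏ j, ⟪ψ j, χ j⟫_ℂ := by
  simp only [PiLp.inner_apply, RCLike.inner_apply, tens, map_prod, ← Finset.prod_mul_distrib]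
  exact (Fintype.prod_sum fun j i => χ j i * conj (ψ j i)).symm

lemma ne_zero_of_tens_ne_zero {n : ℕ} {ψ : Fin n → Qubit} (h : tens ψ ≠ 0) (j : Fin n) :
    ψ j ≠ 0 := by
  intro hj
  apply h
  ext f
  simp only [tens, PiLp.toLp_apply, PiLp.zero_apply]
  exact Finset.prod_eq_zero (Finset.mem_univ j) (by simp [hj])

lemma exists_isBlochPositive_iff_not_of_inner_tens_eq_zero {n : ℕ} {ψ χ : Fin n → Qubit}
    (hψ : ∀ j, ψ j ≠ 0) (hχ : ∀ j, χ j ≠ 0) (h : ⟪tens ψ, tens χ⟫_ℂ = 0) :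
    ∃ j, IsBlochPositive (χ j) ↔ ¬ IsBlochPositive (ψ j) := by
  rw [inner_tens] at h
  obtain ⟨j, -, hj⟩ := Finset.prod_eq_zero_iff.mp h
  exact ⟨j, isBlochPositive_iff_not_of_inner_eq_zero (hψ j) (hχ j) hj⟩

def productColouring {n : ℕ} (v : NQubit n) : Prop :=
  ∃ ψ : Fin n → Qubit, v = tens ψ ∧ ∀ j, IsBlochPositive (ψ j)

lemma not_productColouring_of_inner_eq_zero {n : ℕ} {v w : NQubit n} (h : ⟪v, w⟫_ℂ = 0)
    (hv : productColouring v) : ¬ productColouring w := by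
  rintro ⟨χ, rfl, hχ⟩
  obtain ⟨ψ, rfl, hψ⟩ := hv
  obtain ⟨j, hj⟩ := exists_isBlochPositive_iff_not_of_inner_tens_eq_zero
    (fun j => (hψ j).ne_zero) (fun j => (hχ j).ne_zero) h
  exact hj.mp (hχ j) (hψ j)

section ONBasis

variable {H : Type*} [NormedAddCommGroup H] [InnerProductSpace ℂ H] {B : Finset H}

lemma IsONBasis.ne_zero (hB : IsONBasis B) {v : H} (hv : v ∈ B) : v ≠ 0 :=
  hB.1.ne_zero ⟨v, hv⟩

lemma IsONBasis.inner_eq_zero (hB : IsONBasis B) {v w : H} (hv : v ∈ B) (hw : w ∈ B)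
    (hne : v ≠ w) : ⟪v, w⟫_ℂ = 0 :=
  hB.1.inner_eq_zero (i := ⟨v, hv⟩) (j := ⟨w, hw⟩) (by simpa using hne)

lemma IsONBasis.card_eq_finrank (hB : IsONBasis B) : B.card = Module.finrank ℂ H := by
  let b : Module.Basis B ℂ H :=
    Module.Basis.mk hB.1.linearIndependent (by simp [hB.2])
  rw [Module.finrank_eq_card_basis b, Fintype.card_coe]

lemma IsKSColouring.of_exists {S : Set H} {c : H → Prop}
    (hex : ∀ B : Finset H, ↑B ⊆ S → IsONBasis B → ∃ v ∈ B, c v)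
    (hexcl : ∀ ψ ∈ S, ∀ χ ∈ S, ⟪ψ, χ⟫_ℂ = 0 → ¬(c ψ ∧ c χ)) : IsKSColouring S c := by
  refine ⟨fun B hBS hB => ?_, hexcl⟩
  obtain ⟨v, hvB, hv⟩ := hex B hBS hB
  refine ⟨v, ⟨hvB, hv⟩, fun w ⟨hwB, hw⟩ => ?_⟩
  by_contra hne
  exact hexcl w (hBS hwB) v (hBS hvB) (hB.inner_eq_zero hwB hvB hne) ⟨hw, hv⟩

end ONBasis

lemma exists_productColouring_of_isONBasis {n : ℕ} {B : Finset (NQubit n)} (hB : IsONBasis B)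
    (hprod : ∀ v ∈ B, IsProduct v) : ∃ v ∈ B, productColouring v := by
  choose rep hrep using fun v : B => hprod v v.2
  let pattern : B → Fin n → Prop := fun v j => IsBlochPositive (rep v j)
  have hfactor : ∀ v : B, ∀ j, rep v j ≠ 0 := fun v =>
    ne_zero_of_tens_ne_zero (hrep v ▸ hB.ne_zero v.2)
  have hinj : pattern.Injective := by
    intro v w hvw
    by_contra hne
    have horth := hB.inner_eq_zero v.2 w.2 (Subtype.coe_ne_coe.2 hne)
    rw [hrep v, hrep w] at horth
    obtain ⟨j, hj⟩ :=
      exists_isBlochPositive_iff_not_of_inner_tens_eq_zero (hfactor v) (hfactor w) horth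
    exact iff_not_self ((congrFun hvw j).to_iff.trans hj)
  have hcard : Fintype.card B = Fintype.card (Fin n → Prop) := by
    simp [hB.card_eq_finrank, finrank_euclideanSpace]
  obtain ⟨v, hv⟩ := ((Fintype.bijective_iff_injective_and_card pattern).2 ⟨hinj, hcard⟩).2
    fun _ => True
  exact ⟨v, v.2, rep v, hrep v, fun j => of_eq_true (congrFun hv j)⟩

lemma isKSColouring_productColouring {n : ℕ} {S : Set (NQubit n)}
    (hS : ∀ v ∈ S, IsProduct v) : IsKSColouring S productColouring :=
  .of_exists (fun _ hBS hB => exists_productColouring_of_isONBasis hB fun v hv => hS v (hBS hv))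
    fun _ _ _ _ h hc => not_productColouring_of_inner_eq_zero h hc.1 hc.2

theorem multiqubit_KS_set_contains_entangled_ray_general (n : ℕ) :
    (∀ S : Set (NQubit n), (∀ v ∈ S, IsProduct v ∧ ‖v‖ = 1) →
      ∃ c : NQubit n → Prop, IsKSColouring S c) ∧
    (∀ S : Set (NQubit n), (∀ v ∈ S, ‖v‖ = 1) →
      (¬ ∃ c : NQubit n → Prop, IsKSColouring S c) →
      ∃ v ∈ S, ¬ IsProduct v) := by
  refine ⟨fun S hS => ⟨productColouring, isKSColouring_productColouring fun v hv => (hS v hv).1⟩,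
    fun S _ hKS => ?_⟩
  by_contra! hprod
  exact hKS ⟨productColouring, isKSColouring_productColouring hprod⟩

/-- every set of product unit vectors in `(ℂ²)^{⊗n}` admits a
KS-colouring; consequently, every KS set (a set of unit vectors admitting no
KS-colouring) in `(ℂ²)^{⊗n}` contains at least one non-product (entangled) vector. -/
theorem multiqubit_KS_set_contains_entangled_ray (n : ℕ) (hn : 1 ≤ n) :
    (∀ S : Set (NQubit n), (∀ v ∈ S, IsProduct v ∧ ‖v‖ = 1) →
      ∃ c : NQubit n → Prop, IsKSColouring S c) ∧
    (∀ S : Set (NQubit n), (∀ v ∈ S, ‖v‖ = 1) →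
      (¬ ∃ c : NQubit n → Prop, IsKSColouring S c) →
      ∃ v ∈ S, ¬ IsProduct v) :=
  multiqubit_KS_set_contains_entangled_ray_general n

end
end

section
/- Multiplicity lemma for product bases: let P = {Ψⱼ ⊗ ψⱼ : 1 ≤ j ≤ 2^{m+1}} be an orthonormal basis of (ℂ²)^{⊗(m+1)} = (ℂ²)^{⊗m} ⊗ ℂ² in which each Ψⱼ ∈ (ℂ²)^{⊗m} is a product unit vector and each ψⱼ ∈ ℂ² is a unit vector. For a unit vector ψ ∈ ℂ², let μ(ψ) = #{ j : the ray of ψⱼ equals the ray of ψ }. Then: (a) μ(ψ) = μ(ψ^⊥) for every unit vector ψ ∈ ℂ², where ψ^⊥ is a unit vector orthogonal to ψ; and (b) if E is a maximal set of pairwise non-orthogonal rays among the rays of the ψⱼ (maximal in the sense that every ray of a ψⱼ not in E is orthogonal to some ray in E) and J = { j : the ray of ψⱼ belongs to E }, then |J| = 2^m and {Ψⱼ : j ∈ J} is an orthonormal basis of (ℂ²)^{⊗m}. -/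
open scoped InnerProductSpace
open MeasureTheory

noncomputable section

/-- The vector `Ψ ⊗ ψ` in `(ℂ²)^{⊗(m+1)} = (ℂ²)^{⊗m} ⊗ ℂ²`. -/
noncomputable def glue {m : ℕ} (Ψ : NQubit m) (ψ : Qubit) : NQubit (m + 1) :=
  WithLp.toLp 2 (fun f => Ψ (fun i => f i.castSucc) * ψ (f (Fin.last m)))

/-- Two nonzero qubit vectors span the same ray when they differ by a nonzero complex
scalar. -/
def SameRayC (a b : Qubit) : Prop := ∃ z : ℂ, z ≠ 0 ∧ b = z • a

/-!
Let `A` and `B` be the indices `j` with `ψⱼ` on the ray of `χ`, resp. of `χ^⊥`. If `ψⱼ` and `ψₖ`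
are not orthogonal, orthogonality of `Ψⱼ ⊗ ψⱼ` and `Ψₖ ⊗ ψₖ` forces `Ψⱼ ⊥ Ψₖ`. For `k ∈ A`, every
`ψⱼ` off the ray of `χ^⊥` is non-orthogonal to `χ`, so expanding `Ψₖ ⊗ χ^⊥` in the basis gives
`Ψₖ ⊗ χ^⊥ ∈ span {Ψⱼ ⊗ ψⱼ : j ∈ B} = span {Ψⱼ : j ∈ B} ⊗ χ^⊥`. Hence the orthonormal family
`(Ψₖ)_{k ∈ A}` lies in the span of `(Ψⱼ)_{j ∈ B}`, so `|A| ≤ |B|`, and (a) follows by symmetry.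

For (b), the rays in `E` are pairwise non-orthogonal, so `(Ψⱼ)_{j ∈ J}` is orthonormal and
`|J| ≤ 2^m`. By maximality every `j ∉ J` has `ψⱼ` on the ray of `e^⊥` for some `e ∈ E`, so by (a)
`2^{m+1} - |J| ≤ ∑_{e ∈ E} μ(e^⊥) = ∑_{e ∈ E} μ(e) = |J|`.
-/

section TwoDim

variable {𝕜 E : Type*} [RCLike 𝕜] [NormedAddCommGroup E] [InnerProductSpace 𝕜 E]
  [FiniteDimensional 𝕜 E]

lemma finrank_orthogonal_span_singleton_of_finrank_eq_two (hE : Module.finrank 𝕜 E = 2)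
    {y : E} (hy : y ≠ 0) : Module.finrank 𝕜 (𝕜 ∙ y)ᗮ = 1 := by
  have h := (𝕜 ∙ y).finrank_add_finrank_orthogonal
  rw [finrank_span_singleton hy, hE] at h
  omega

lemma exists_smul_eq_of_inner_eq_zero (hE : Module.finrank 𝕜 E = 2) {y v x : E} (hy : y ≠ 0)
    (hv : v ≠ 0) (hyv : ⟪y, v⟫_𝕜 = 0) (hyx : ⟪y, x⟫_𝕜 = 0) : ∃ c : 𝕜, c • v = x := by
  have hv' : (⟨v, Submodule.mem_orthogonal_singleton_iff_inner_right.2 hyv⟩ : (𝕜 ∙ y)ᗮ) ≠ 0 :=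
    fun h => hv (congrArg Subtype.val h)
  obtain ⟨c, hc⟩ := (finrank_eq_one_iff_of_nonzero' _ hv').1
    (finrank_orthogonal_span_singleton_of_finrank_eq_two hE hy)
    ⟨x, Submodule.mem_orthogonal_singleton_iff_inner_right.2 hyx⟩
  exact ⟨c, congrArg Subtype.val hc⟩

lemma exists_ne_zero_inner_eq_zero (hE : Module.finrank 𝕜 E = 2) {y : E} (hy : y ≠ 0) :
    ∃ v ≠ 0, ⟪y, v⟫_𝕜 = 0 := by
  have hne : (𝕜 ∙ y)ᗮ ≠ ⊥ := fun h => by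
    have h1 := finrank_orthogonal_span_singleton_of_finrank_eq_two hE hy
    rw [h, finrank_bot] at h1
    exact zero_ne_one h1
  obtain ⟨v, hv, hv0⟩ := Submodule.exists_mem_ne_zero_of_ne_bot hne
  exact ⟨v, hv0, Submodule.mem_orthogonal_singleton_iff_inner_right.1 hv⟩

end TwoDim

lemma Orthonormal.mem_span_image_of_inner_eq_zero {𝕜 E ι : Type*} [RCLike 𝕜]
    [NormedAddCommGroup E] [InnerProductSpace 𝕜 E] [Fintype ι] {b : ι → E}
    (hb : Orthonormal 𝕜 b) (hspan : Submodule.span 𝕜 (Set.range b) = ⊤) {s : Set ι} {x : E}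
    (hx : ∀ i ∉ s, ⟪b i, x⟫_𝕜 = 0) : x ∈ Submodule.span 𝕜 (b '' s) := by
  rw [← (OrthonormalBasis.mk hb hspan.ge).sum_repr' x]
  refine Submodule.sum_mem _ fun i _ => ?_
  by_cases hi : i ∈ s
  · exact Submodule.smul_mem _ _ (Submodule.subset_span ⟨i, hi, by simp⟩)
  · simp [hx i hi]

lemma finrank_qubit : Module.finrank ℂ Qubit = 2 := finrank_euclideanSpace_fin

lemma finrank_nQubit (m : ℕ) : Module.finrank ℂ (NQubit m) = 2 ^ m := by
  simp [finrank_euclideanSpace]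

namespace SameRayC

variable {a b a' b' c : Qubit}

lemma refl (a : Qubit) : SameRayC a a := ⟨1, one_ne_zero, (one_smul _ _).symm⟩

lemma symm (h : SameRayC a b) : SameRayC b a := by
  obtain ⟨z, hz, rfl⟩ := h
  exact ⟨z⁻¹, inv_ne_zero hz, by rw [smul_smul, inv_mul_cancel₀ hz, one_smul]⟩

lemma trans (h₁ : SameRayC a b) (h₂ : SameRayC b c) : SameRayC a c := by
  obtain ⟨z, hz, rfl⟩ := h₁
  obtain ⟨w, hw, rfl⟩ := h₂
  exact ⟨w * z, mul_ne_zero hw hz, by rw [smul_smul]⟩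

lemma ne_zero (h : SameRayC a b) (ha : a ≠ 0) : b ≠ 0 := by
  obtain ⟨z, hz, rfl⟩ := h
  exact smul_ne_zero hz ha

lemma inner_eq_zero_iff (ha : SameRayC a a') (hb : SameRayC b b') :
    ⟪a', b'⟫_ℂ = 0 ↔ ⟪a, b⟫_ℂ = 0 := by
  obtain ⟨z, hz, rfl⟩ := ha
  obtain ⟨w, hw, rfl⟩ := hb
  simp [hz, hw]

end SameRayC

lemma sameRayC_iff_inner_eq_zero {χ χp v : Qubit} (hχ : χ ≠ 0) (hχp : χp ≠ 0)
    (h : ⟪χ, χp⟫_ℂ = 0) (hv : v ≠ 0) : SameRayC v χp ↔ ⟪χ, v⟫_ℂ = 0 := by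
  refine ⟨fun hvχp => ((SameRayC.refl χ).inner_eq_zero_iff hvχp).1 h, fun hχv => ?_⟩
  obtain ⟨c, rfl⟩ := exists_smul_eq_of_inner_eq_zero finrank_qubit hχ hv hχv h
  exact ⟨c, left_ne_zero_of_smul hχp, rfl⟩

section Glue

variable {m : ℕ}

lemma glue_snoc (Ψ : NQubit m) (ψ : Qubit) (g : Fin m → Fin 2) (a : Fin 2) :
    glue Ψ ψ (Fin.snoc g a : Fin (m + 1) → Fin 2) = Ψ g * ψ a := by
  show Ψ (fun i => (Fin.snoc g a : Fin (m + 1) → Fin 2) i.castSucc)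
    * ψ ((Fin.snoc g a : Fin (m + 1) → Fin 2) (Fin.last m)) = _
  simp only [Fin.snoc_castSucc, Fin.snoc_last]

lemma inner_glue (Ψ Φ : NQubit m) (ψ χ : Qubit) :
    ⟪glue Ψ ψ, glue Φ χ⟫_ℂ = ⟪Ψ, Φ⟫_ℂ * ⟪ψ, χ⟫_ℂ := by
  simp only [PiLp.inner_apply, RCLike.inner_apply]
  rw [← (Fin.snocEquiv fun _ => Fin 2).sum_comp, Fintype.sum_prod_type, Finset.sum_mul_sum,
    Finset.sum_comm]
  refine Finset.sum_congr rfl fun g _ => Finset.sum_congr rfl fun a _ => ?_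
  rw [show Fin.snocEquiv (fun _ => Fin 2) (a, g) = (Fin.snoc g a : Fin (m + 1) → Fin 2) from rfl,
    glue_snoc, glue_snoc, map_mul]
  ring

lemma glue_smul_right (Ψ : NQubit m) (z : ℂ) (ψ : Qubit) : glue Ψ (z • ψ) = z • glue Ψ ψ := by
  ext f
  simp only [glue, PiLp.smul_apply, smul_eq_mul]
  ring

lemma glue_zero_right (Ψ : NQubit m) : glue Ψ 0 = 0 := by
  ext f
  simp [glue]

def glueLeft (χ : Qubit) : NQubit m →ₗ[ℂ] NQubit (m + 1) where
  toFun Ψ := glue Ψ χ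
  map_add' Ψ Φ := by
    ext f
    simp [glue, add_mul]
  map_smul' z Ψ := by
    ext f
    simp [glue, mul_assoc]

lemma glueLeft_apply (χ : Qubit) (Ψ : NQubit m) : glueLeft χ Ψ = glue Ψ χ := rfl

lemma glueLeft_injective {χ : Qubit} (hχ : χ ≠ 0) : Function.Injective (glueLeft (m := m) χ) := by
  refine (injective_iff_map_eq_zero _).2 fun Ψ hΨ => ?_
  have h : ⟪Ψ, Ψ⟫_ℂ * ⟪χ, χ⟫_ℂ = 0 := by
    rw [← inner_glue, ← glueLeft_apply, hΨ, inner_zero_left]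
  exact inner_self_eq_zero.1 ((mul_eq_zero.1 h).resolve_right (inner_self_ne_zero.2 hχ))

end Glue

section ProductBasis

open Finset

variable {m : ℕ} {ι : Type*} {Ψ : ι → NQubit m} {ψ : ι → Qubit}

lemma ne_zero_of_orthonormal_glue (horth : Orthonormal ℂ fun j => glue (Ψ j) (ψ j)) (j : ι) :
    ψ j ≠ 0 := fun h => horth.ne_zero j (by simp only [h, glue_zero_right])

lemma inner_eq_zero_of_orthonormal_glue (horth : Orthonormal ℂ fun j => glue (Ψ j) (ψ j))
    {j k : ι} (hjk : j ≠ k) (h : ⟪ψ j, ψ k⟫_ℂ ≠ 0) : ⟪Ψ j, Ψ k⟫_ℂ = 0 := by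
  have h0 := horth.inner_eq_zero hjk
  rw [inner_glue] at h0
  exact (mul_eq_zero.1 h0).resolve_right h

lemma orthonormal_restrict_of_orthonormal_glue (horth : Orthonormal ℂ fun j => glue (Ψ j) (ψ j))
    (hΨ : ∀ j, ‖Ψ j‖ = 1) {S : Set ι} (hS : ∀ j ∈ S, ∀ k ∈ S, ⟪ψ j, ψ k⟫_ℂ ≠ 0) :
    Orthonormal ℂ fun j : S => Ψ j :=
  ⟨fun j => hΨ j, fun j k hjk =>
    inner_eq_zero_of_orthonormal_glue horth (Subtype.coe_ne_coe.2 hjk) (hS j j.2 k k.2)⟩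

lemma orthonormal_restrict_sameRayC_mem (horth : Orthonormal ℂ fun j => glue (Ψ j) (ψ j))
    (hΨ : ∀ j, ‖Ψ j‖ = 1) {E : Finset Qubit} (hE0 : ∀ e ∈ E, e ≠ 0)
    (hE : ∀ e ∈ E, ∀ e' ∈ E, e ≠ e' → ⟪e, e'⟫_ℂ ≠ 0) :
    Orthonormal ℂ fun j : {j | ∃ e ∈ E, SameRayC e (ψ j)} => Ψ j := by
  refine orthonormal_restrict_of_orthonormal_glue horth hΨ ?_
  rintro j ⟨e, he, hj⟩ k ⟨e', he', hk⟩
  refine (hj.inner_eq_zero_iff hk).not.2 ?_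
  by_cases hee' : e = e'
  · exact hee' ▸ inner_self_ne_zero.2 (hE0 e he)
  · exact hE e he e' he' hee'

variable [Fintype ι]

lemma mem_span_of_sameRayC (horth : Orthonormal ℂ fun j => glue (Ψ j) (ψ j))
    (hspan : Submodule.span ℂ (Set.range fun j => glue (Ψ j) (ψ j)) = ⊤)
    {χ χp : Qubit} (hχ : χ ≠ 0) (hχp : χp ≠ 0) (h : ⟪χ, χp⟫_ℂ = 0) {k : ι}
    (hk : SameRayC (ψ k) χ) :
    Ψ k ∈ Submodule.span ℂ (Ψ '' {j | SameRayC (ψ j) χp}) := by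
  have hglue : glue (Ψ k) χp ∈
      Submodule.span ℂ ((fun j => glue (Ψ j) (ψ j)) '' {j | SameRayC (ψ j) χp}) := by
    refine horth.mem_span_image_of_inner_eq_zero hspan fun j hj => ?_
    have hχj : ⟪ψ j, χ⟫_ℂ ≠ 0 := inner_eq_zero_symm.not.1
      ((sameRayC_iff_inner_eq_zero hχ hχp h (ne_zero_of_orthonormal_glue horth j)).not.1 hj)
    rw [inner_glue]
    by_cases hjk : j = k
    · subst hjk
      exact mul_eq_zero_of_right _ ((hk.inner_eq_zero_iff (SameRayC.refl χp)).1 h)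
    · exact mul_eq_zero_of_left (inner_eq_zero_of_orthonormal_glue horth hjk
        (mt ((SameRayC.refl (ψ j)).inner_eq_zero_iff hk).2 hχj)) _
  have hle : Submodule.span ℂ ((fun j => glue (Ψ j) (ψ j)) '' {j | SameRayC (ψ j) χp}) ≤
      (Submodule.span ℂ (Ψ '' {j | SameRayC (ψ j) χp})).map (glueLeft χp) := by
    rw [Submodule.span_le]
    rintro _ ⟨j, hj, rfl⟩
    beta_reduce
    obtain ⟨z, hz, hzj⟩ := id hj
    have hj' : glue (Ψ j) (ψ j) = z⁻¹ • glueLeft χp (Ψ j) := by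
      rw [glueLeft_apply, hzj, glue_smul_right, inv_smul_smul₀ hz]
    rw [SetLike.mem_coe, hj']
    exact Submodule.smul_mem _ _ (Submodule.mem_map_of_mem (Submodule.subset_span ⟨j, hj, rfl⟩))
  obtain ⟨Φ, hΦ, hΦk⟩ := Submodule.mem_map.1 (hle hglue)
  rwa [glueLeft_injective hχp hΦk] at hΦ

lemma natCard_sameRayC_le (horth : Orthonormal ℂ fun j => glue (Ψ j) (ψ j))
    (hspan : Submodule.span ℂ (Set.range fun j => glue (Ψ j) (ψ j)) = ⊤)
    (hΨ : ∀ j, ‖Ψ j‖ = 1) {χ χp : Qubit} (hχ : χ ≠ 0) (hχp : χp ≠ 0) (h : ⟪χ, χp⟫_ℂ = 0) :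
    Nat.card {j // SameRayC (ψ j) χ} ≤ Nat.card {j // SameRayC (ψ j) χp} := by
  classical
  have hA : LinearIndependent ℂ fun j : {j | SameRayC (ψ j) χ} => Ψ j :=
    (orthonormal_restrict_of_orthonormal_glue horth hΨ fun j hj k hk h0 =>
      hχ (inner_self_eq_zero.1 ((hj.symm.inner_eq_zero_iff hk.symm).1 h0))).linearIndependent
  calc Nat.card {j // SameRayC (ψ j) χ}
      = Module.finrank ℂ (Submodule.span ℂ (Set.range fun j : {j | SameRayC (ψ j) χ} => Ψ j)) := by
        rw [finrank_span_eq_card hA, Nat.card_eq_fintype_card]; rfl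
    _ ≤ Module.finrank ℂ (Submodule.span ℂ (Ψ '' {j | SameRayC (ψ j) χp})) :=
        Submodule.finrank_mono (Submodule.span_le.2 (Set.range_subset_iff.2 fun k =>
          mem_span_of_sameRayC horth hspan hχ hχp h k.2))
    _ ≤ Nat.card {j // SameRayC (ψ j) χp} := by
        rw [Set.image_eq_range, Nat.card_eq_fintype_card]
        exact finrank_range_le_card _

lemma natCard_sameRayC_eq (horth : Orthonormal ℂ fun j => glue (Ψ j) (ψ j))
    (hspan : Submodule.span ℂ (Set.range fun j => glue (Ψ j) (ψ j)) = ⊤)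
    (hΨ : ∀ j, ‖Ψ j‖ = 1) {χ χp : Qubit} (hχ : χ ≠ 0) (hχp : χp ≠ 0) (h : ⟪χ, χp⟫_ℂ = 0) :
    Nat.card {j // SameRayC (ψ j) χ} = Nat.card {j // SameRayC (ψ j) χp} :=
  (natCard_sameRayC_le horth hspan hΨ hχ hχp h).antisymm
    (natCard_sameRayC_le horth hspan hΨ hχp hχ (inner_eq_zero_symm.1 h))

open Classical in
lemma card_not_sameRayC_mem_le (horth : Orthonormal ℂ fun j => glue (Ψ j) (ψ j))
    (hspan : Submodule.span ℂ (Set.range fun j => glue (Ψ j) (ψ j)) = ⊤)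
    (hΨ : ∀ j, ‖Ψ j‖ = 1) {E : Finset Qubit} (hE0 : ∀ e ∈ E, e ≠ 0)
    (hE : ∀ e ∈ E, ∀ e' ∈ E, e ≠ e' → ¬ SameRayC e e')
    (hmax : ∀ j, (¬ ∃ e ∈ E, SameRayC e (ψ j)) → ∃ e ∈ E, ⟪e, ψ j⟫_ℂ = 0) :
    #{j | ¬ ∃ e ∈ E, SameRayC e (ψ j)} ≤ #{j | ∃ e ∈ E, SameRayC e (ψ j)} := by
  choose! perp hperp0 hperp using fun e (he : e ∈ E) =>
    exists_ne_zero_inner_eq_zero finrank_qubit (hE0 e he)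
  have hdisj : (E : Set Qubit).PairwiseDisjoint fun e => ({j | SameRayC (ψ j) e} : Finset ι) := by
    intro e he e' he' hee'
    refine disjoint_left.2 fun j hj hj' => hE e he e' he' hee' ?_
    simp only [mem_filter, mem_univ, true_and] at hj hj'
    exact hj.symm.trans hj'
  calc #{j | ¬ ∃ e ∈ E, SameRayC e (ψ j)}
      ≤ #(E.biUnion fun e => {j | SameRayC (ψ j) (perp e)}) := by
        refine card_le_card fun j hj => ?_
        simp only [mem_filter, mem_univ, true_and, mem_biUnion] at hj ⊢
        obtain ⟨e, he, hej⟩ := hmax j hj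
        exact ⟨e, he, (sameRayC_iff_inner_eq_zero (hE0 e he) (hperp0 e he) (hperp e he)
          (ne_zero_of_orthonormal_glue horth j)).2 hej⟩
    _ ≤ ∑ e ∈ E, #{j | SameRayC (ψ j) (perp e)} := card_biUnion_le
    _ = ∑ e ∈ E, #{j | SameRayC (ψ j) e} := by
        refine sum_congr rfl fun e he => ?_
        have hμ := natCard_sameRayC_eq horth hspan hΨ (hE0 e he) (hperp0 e he) (hperp e he)
        simp only [Nat.card_eq_fintype_card, Fintype.card_subtype] at hμ
        exact hμ.symm
    _ = #(E.biUnion fun e => {j | SameRayC (ψ j) e}) := (card_biUnion hdisj).symm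
    _ ≤ #{j | ∃ e ∈ E, SameRayC e (ψ j)} := by
        refine card_le_card fun j hj => ?_
        simp only [mem_filter, mem_univ, true_and, mem_biUnion] at hj ⊢
        obtain ⟨e, he, hej⟩ := hj
        exact ⟨e, he, hej.symm⟩

lemma card_eq_of_orthonormal_glue (horth : Orthonormal ℂ fun j => glue (Ψ j) (ψ j))
    (hspan : Submodule.span ℂ (Set.range fun j => glue (Ψ j) (ψ j)) = ⊤) :
    Fintype.card ι = 2 ^ (m + 1) := by
  rw [← finrank_nQubit, Module.finrank_eq_card_basis (OrthonormalBasis.mk horth hspan.ge).toBasis]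

lemma natCard_sameRayC_mem_eq (horth : Orthonormal ℂ fun j => glue (Ψ j) (ψ j))
    (hspan : Submodule.span ℂ (Set.range fun j => glue (Ψ j) (ψ j)) = ⊤)
    (hΨ : ∀ j, ‖Ψ j‖ = 1) {E : Finset Qubit} (hE0 : ∀ e ∈ E, e ≠ 0)
    (hE : ∀ e ∈ E, ∀ e' ∈ E, e ≠ e' → ¬ SameRayC e e' ∧ ⟪e, e'⟫_ℂ ≠ 0)
    (hmax : ∀ j, (¬ ∃ e ∈ E, SameRayC e (ψ j)) → ∃ e ∈ E, ⟪e, ψ j⟫_ℂ = 0) :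
    Nat.card {j | ∃ e ∈ E, SameRayC e (ψ j)} = 2 ^ m := by
  classical
  have hJ := (orthonormal_restrict_sameRayC_mem horth hΨ hE0 fun e he e' he' h =>
    (hE e he e' he' h).2).linearIndependent.fintype_card_le_finrank
  have hcompl := card_not_sameRayC_mem_le horth hspan hΨ hE0
    (fun e he e' he' h => (hE e he e' he' h).1) hmax
  have htot := card_filter_add_card_filter_not (s := univ) fun j => ∃ e ∈ E, SameRayC e (ψ j)
  rw [card_univ, card_eq_of_orthonormal_glue horth hspan, pow_succ] at htot
  rw [finrank_nQubit, Fintype.card_subtype] at hJ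
  rw [Nat.card_eq_fintype_card, Fintype.card_subtype]
  simp only [Set.mem_ofPred_eq] at hJ ⊢
  omega

end ProductBasis

theorem product_basis_multiplicity_lemma_general
    (m : ℕ) (Ψ : Fin (2 ^ (m + 1)) → NQubit m) (ψ : Fin (2 ^ (m + 1)) → Qubit)
    (hΨ : ∀ j, ‖Ψ j‖ = 1)
    (horth : Orthonormal ℂ (fun j => glue (Ψ j) (ψ j)))
    (hspan : Submodule.span ℂ (Set.range fun j => glue (Ψ j) (ψ j)) = ⊤) :
    (∀ χ χp : Qubit, ‖χ‖ = 1 → ‖χp‖ = 1 → ⟪χ, χp⟫_ℂ = 0 →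
      Nat.card {j // SameRayC (ψ j) χ} = Nat.card {j // SameRayC (ψ j) χp}) ∧
    (∀ E : Finset Qubit,
      (∀ e ∈ E, ∃ j, SameRayC (ψ j) e) →
      (∀ e ∈ E, ∀ e' ∈ E, e ≠ e' → ¬ SameRayC e e' ∧ ⟪e, e'⟫_ℂ ≠ 0) →
      (∀ j, (¬ ∃ e ∈ E, SameRayC e (ψ j)) → ∃ e ∈ E, ⟪e, ψ j⟫_ℂ = 0) →
      ∀ J : Set (Fin (2 ^ (m + 1))), J = {j | ∃ e ∈ E, SameRayC e (ψ j)} →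
        Nat.card J = 2 ^ m ∧
        Orthonormal ℂ (fun j : J => Ψ j) ∧
        Submodule.span ℂ (Ψ '' J) = ⊤) := by
  classical
  refine ⟨fun χ χp hχ hχp h => natCard_sameRayC_eq horth hspan hΨ
    (norm_ne_zero_iff.1 (hχ ▸ one_ne_zero)) (norm_ne_zero_iff.1 (hχp ▸ one_ne_zero)) h, ?_⟩
  rintro E hEψ hE hmax J rfl
  have hE0 : ∀ e ∈ E, e ≠ 0 := fun e he =>
    let ⟨j, hj⟩ := hEψ e he
    hj.ne_zero (ne_zero_of_orthonormal_glue horth j)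
  have hJ := orthonormal_restrict_sameRayC_mem horth hΨ hE0 fun e he e' he' h =>
    (hE e he e' he' h).2
  have hcard := natCard_sameRayC_mem_eq horth hspan hΨ hE0 hE hmax
  refine ⟨hcard, hJ, ?_⟩
  rw [Set.image_eq_range]
  exact hJ.linearIndependent.span_eq_top_of_card_eq_finrank'
    (by rw [← Nat.card_eq_fintype_card, hcard, finrank_nQubit])

/-- multiplicity lemma for product bases: if
`P = {Ψⱼ ⊗ ψⱼ : 1 ≤ j ≤ 2^(m+1)}` is an orthonormal basis of `(ℂ²)^{⊗(m+1)}` with each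
`Ψⱼ` a product unit vector of `(ℂ²)^{⊗m}` and each `ψⱼ` a unit qubit vector, and
`μ(ψ)` counts the `j` with ray of `ψⱼ` equal to the ray of `ψ`, then
(a) `μ(ψ) = μ(ψ^⊥)` for every unit `ψ` with unit `ψ^⊥ ⊥ ψ`; and
(b) for every maximal set `E` of pairwise non-orthogonal rays among the rays of the
`ψⱼ`, with `J = {j : ray of ψⱼ belongs to E}`, one has `|J| = 2^m` and
`{Ψⱼ : j ∈ J}` is an orthonormal basis of `(ℂ²)^{⊗m}`. -/
theorem product_basis_multiplicity_lemma
    (m : ℕ) (Ψ : Fin (2 ^ (m + 1)) → NQubit m) (ψ : Fin (2 ^ (m + 1)) → Qubit)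
    (hΨprod : ∀ j, IsProduct (Ψ j)) (hΨ : ∀ j, ‖Ψ j‖ = 1) (hψ : ∀ j, ‖ψ j‖ = 1)
    (horth : Orthonormal ℂ (fun j => glue (Ψ j) (ψ j)))
    (hspan : Submodule.span ℂ (Set.range fun j => glue (Ψ j) (ψ j)) = ⊤) :
    (∀ χ χp : Qubit, ‖χ‖ = 1 → ‖χp‖ = 1 → ⟪χ, χp⟫_ℂ = 0 →
      Nat.card {j // SameRayC (ψ j) χ} = Nat.card {j // SameRayC (ψ j) χp}) ∧
    (∀ E : Finset Qubit,
      (∀ e ∈ E, ∃ j, SameRayC (ψ j) e) →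
      (∀ e ∈ E, ∀ e' ∈ E, e ≠ e' → ¬ SameRayC e e' ∧ ⟪e, e'⟫_ℂ ≠ 0) →
      (∀ j, (¬ ∃ e ∈ E, SameRayC e (ψ j)) → ∃ e ∈ E, ⟪e, ψ j⟫_ℂ = 0) →
      ∀ J : Set (Fin (2 ^ (m + 1))), J = {j | ∃ e ∈ E, SameRayC e (ψ j)} →
        Nat.card J = 2 ^ m ∧
        Orthonormal ℂ (fun j : J => Ψ j) ∧
        Submodule.span ℂ (Ψ '' J) = ⊤) :=
  product_basis_multiplicity_lemma_general m Ψ ψ hΨ horth hspan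

end
end

section
/- Unentangled Kochen–Specker sets in the presence of a higher-dimensional subsystem: let H₁, …, Hₙ be finite-dimensional complex Hilbert spaces with dim(Hⱼ) ≥ 2 for all j and dim(Hⱼ) ≥ 3 for at least one j. Then there exists a finite set S of product unit vectors in H₁ ⊗ ⋯ ⊗ Hₙ that admits no KS-colouring; moreover S can be chosen so that already the subfamily of direct product bases contained in S witnesses uncolourability (there is no map c : S → {0,1} assigning exactly one value 1 to each direct product basis contained in S and never assigning 1 to two mutually orthogonal elements of S). -/
open scoped InnerProductSpace
open MeasureTheory

noncomputable section

/-- The product vector `ψ₁ ⊗ ⋯ ⊗ ψₙ` in `H₁ ⊗ ⋯ ⊗ Hₙ`, where the `j`-th factor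
`Hⱼ = ℂ^{d j}` is modelled as `EuclideanSpace ℂ (Fin (d j))` and the full tensor product
as `EuclideanSpace ℂ (Π j, Fin (d j))`; inner products multiply across factors. -/
noncomputable def tensD {n : ℕ} {d : Fin n → ℕ}
    (ψ : (j : Fin n) → EuclideanSpace ℂ (Fin (d j))) :
    EuclideanSpace ℂ ((j : Fin n) → Fin (d j)) :=
  WithLp.toLp 2 (fun f => ∏ j, ψ j (f j))

/-- A direct product basis of `H₁ ⊗ ⋯ ⊗ Hₙ`: the elementwise tensor product of an
orthonormal basis of each factor. -/
def IsDirectProductBasis {n : ℕ} {d : Fin n → ℕ}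
    (B : Finset (EuclideanSpace ℂ ((j : Fin n) → Fin (d j)))) : Prop :=
  ∃ b : (j : Fin n) → Fin (d j) → EuclideanSpace ℂ (Fin (d j)),
    (∀ j, Orthonormal ℂ (b j)) ∧
    (B : Set (EuclideanSpace ℂ ((j : Fin n) → Fin (d j)))) =
      Set.range (fun f : (j : Fin n) → Fin (d j) => tensD (fun j => b j (f j)))


/-!
Fix a factor `j₀` of dimension `m ≥ 3`. In `ℂ³` there is a KS set of 31 integer vectors in 17
orthogonal triples; its uncolourability is a finite check. It is lifted to `ℂᵐ` one dimension
at a time: embed `ℂᵏ` into `ℂᵏ⁺¹` both as the first and as the last `k` coordinates, and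
complete every image basis by `e_last`, resp. `e_0`. Since `e_0 ⊥ e_last`, one of the two is
uncoloured, and then the colouring restricts to a colouring of one copy of the smaller set.
Finally, put the set of `ℂᵐ` into the factor `j₀` and standard basis vectors `e_{x j}` into all
other factors. The bases obtained are direct product bases, and any two coloured vectors in them
agree off `j₀` (otherwise they are orthogonal), so the colouring restricts to a single slice
`ℂᵐ ⊗ ⨂_{j ≠ j₀} e_{x j}`, which is impossible.
-/

theorem existsUnique_of_existsUnique_mem_image {ι α : Type*} [Fintype ι] [DecidableEq α]
    {β : ι → α} (hβ : β.Injective) {p : α → Prop}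
    (h : ∃! v, v ∈ Finset.univ.image β ∧ p v) : ∃! k, p (β k) := by
  obtain ⟨_, ⟨hv, hpv⟩, huniq⟩ := h
  obtain ⟨k, -, rfl⟩ := Finset.mem_image.1 hv
  exact ⟨k, hpv, fun k' hk' =>
    hβ (huniq _ ⟨Finset.mem_image_of_mem _ (Finset.mem_univ k'), hk'⟩)⟩

section Colouring

variable {E F ι : Type*} [NormedAddCommGroup E] [InnerProductSpace ℂ E]
  [NormedAddCommGroup F] [InnerProductSpace ℂ F]

theorem norm_map_of_inner_map_map {f : E → F} (hf : ∀ v w, ⟪f v, f w⟫_ℂ = ⟪v, w⟫_ℂ) (v : E) :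
    ‖f v‖ = ‖v‖ := by
  simp only [@norm_eq_sqrt_re_inner ℂ, hf]

theorem Orthonormal.comp_of_inner_map_map {β : ι → E} (hβ : Orthonormal ℂ β) {f : E → F}
    (hf : ∀ v w, ⟪f v, f w⟫_ℂ = ⟪v, w⟫_ℂ) : Orthonormal ℂ (f ∘ β) := by
  classical
  rw [orthonormal_iff_ite] at hβ ⊢
  simpa [hf] using hβ

theorem isONBasis_image [Fintype ι] [DecidableEq E] [FiniteDimensional ℂ E] {β : ι → E}
    (hβ : Orthonormal ℂ β) (hcard : Fintype.card ι = Module.finrank ℂ E) :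
    IsONBasis (Finset.univ.image β) := by
  have hrange : ((Finset.univ.image β : Finset E) : Set E) = Set.range β := by simp
  refine ⟨orthonormal_subtype_iff_ite.2 ?_, ?_⟩
  · simp only [hrange, Set.forall_mem_range]
    intro i j
    classical
    rw [orthonormal_iff_ite.1 hβ]
    exact if_congr hβ.linearIndependent.injective.eq_iff.symm rfl rfl
  · rw [hrange]
    exact hβ.linearIndependent.span_eq_top_of_card_eq_finrank' hcard

def NoOrthogonalPair (S : Set E) (c : E → Prop) : Prop :=
  ∀ v ∈ S, ∀ w ∈ S, ⟪v, w⟫_ℂ = 0 → ¬(c v ∧ c w)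

theorem NoOrthogonalPair.comp {S : Set E} {T : Set F} {c : F → Prop}
    (hc : NoOrthogonalPair T c) {f : E → F} (hf : ∀ v w, ⟪f v, f w⟫_ℂ = ⟪v, w⟫_ℂ)
    (hST : Set.MapsTo f S T) : NoOrthogonalPair S (fun v => c (f v)) :=
  fun v hv w hw hvw => hc _ (hST hv) _ (hST hw) (by rwa [hf])

def IsBasisColouring (S : Set E) (𝓑 : Set (ι → E)) (c : E → Prop) : Prop :=
  (∀ β ∈ 𝓑, ∃! k, c (β k)) ∧ NoOrthogonalPair S c

variable (E ι) in
structure KSWitness where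
  S : Finset E
  bases : Set (ι → E)
  norm_eq_one : ∀ v ∈ S, ‖v‖ = 1
  orthonormal : ∀ β ∈ bases, Orthonormal ℂ β
  mem : ∀ β ∈ bases, ∀ k, β k ∈ S
  not_isBasisColouring : ∀ c, ¬IsBasisColouring (S : Set E) bases c

theorem KSWitness.bases_nonempty (W : KSWitness E ι) : W.bases.Nonempty := by
  refine Set.nonempty_iff_ne_empty.2 fun h => W.not_isBasisColouring (fun _ => False) ?_
  simp [IsBasisColouring, NoOrthogonalPair, h]

theorem KSWitness.not_colourable [Fintype ι] [DecidableEq E] (W : KSWitness E ι)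
    {P : Finset E → Prop} (hP : ∀ β ∈ W.bases, P (Finset.univ.image β)) :
    ¬∃ c : E → Prop, (∀ B : Finset E, ↑B ⊆ (W.S : Set E) → P B → ∃! v, v ∈ B ∧ c v) ∧
      NoOrthogonalPair (W.S : Set E) c := by
  rintro ⟨c, hB, hc⟩
  refine W.not_isBasisColouring c ⟨fun β hβ => ?_, hc⟩
  refine existsUnique_of_existsUnique_mem_image
    (W.orthonormal β hβ).linearIndependent.injective (hB _ ?_ (hP β hβ))
  simpa [Set.subset_def] using W.mem β hβ

end Colouring

namespace ColouringSearch

variable {α : Type*} [DecidableEq α] (orth : α → α → Bool)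

def extend (A : List (α × Bool)) (v : α) (b : Bool) : Option (List (α × Bool)) :=
  if A.contains (v, !b) || (b && A.any fun p => p.2 && orth p.1 v) then none
  else some ((v, b) :: A)

def extendBasis {m : ℕ} (t : Fin m → α) (k : Fin m) (A : List (α × Bool)) :
    Option (List (α × Bool)) :=
  (List.finRange m).foldlM (fun A j => extend orth A (t j) (decide (j = k))) A

def search {m : ℕ} : List (Fin m → α) → List (α × Bool) → Bool
  | [], _ => true
  | t :: ts, A => (List.finRange m).any fun k => (extendBasis orth t k A).any (search ts)

def Agrees (c : α → Bool) (A : List (α × Bool)) : Prop := ∀ p ∈ A, c p.1 = p.2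

variable {orth} {c : α → Bool}

theorem extend_eq_some (hc : ∀ u v, orth u v → ¬(c u ∧ c v)) {A : List (α × Bool)}
    (hA : Agrees c A) (v : α) : ∃ A', extend orth A v (c v) = some A' ∧ Agrees c A' := by
  refine ⟨_, if_neg ?_, ?_⟩
  · simp only [Bool.or_eq_true, Bool.and_eq_true, List.contains_iff_mem, List.any_eq_true,
      not_or, not_and, not_exists]
    refine ⟨fun h => by simpa using hA _ h, fun hv p hp hp2 horth => hc _ _ horth ?_⟩
    exact ⟨(hA p hp).trans hp2, hv⟩
  · rintro p (_ | ⟨_, hp⟩)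
    · rfl
    · exact hA p hp

theorem extendBasis_eq_some (hc : ∀ u v, orth u v → ¬(c u ∧ c v)) {m : ℕ} {t : Fin m → α}
    {k : Fin m} (ht : ∀ j, c (t j) = decide (j = k)) {A : List (α × Bool)}
    (hA : Agrees c A) : ∃ A', extendBasis orth t k A = some A' ∧ Agrees c A' := by
  unfold extendBasis
  induction List.finRange m generalizing A with
  | nil => exact ⟨A, rfl, hA⟩
  | cons j l ih =>
    obtain ⟨A₁, h₁, hA₁⟩ := ht j ▸ extend_eq_some hc hA (t j)
    simpa [List.foldlM_cons, h₁] using ih hA₁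

theorem search_eq_true (hc : ∀ u v, orth u v → ¬(c u ∧ c v)) {m : ℕ}
    {ts : List (Fin m → α)} (hts : ∀ t ∈ ts, ∃! k, c (t k)) {A : List (α × Bool)}
    (hA : Agrees c A) : search orth ts A = true := by
  induction ts generalizing A with
  | nil => rfl
  | cons t ts ih =>
    obtain ⟨k, hk, hk_uniq⟩ := hts t List.mem_cons_self
    have ht : ∀ j, c (t j) = decide (j = k) := fun j => by
      by_cases hj : j = k
      · simpa [hj] using hk
      · simpa [hj] using mt (hk_uniq j) hj
    obtain ⟨A', hA'eq, hA'⟩ := extendBasis_eq_some hc ht hA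
    simp only [search, List.any_eq_true]
    exact ⟨k, List.mem_finRange k, by
      simp [hA'eq, ih (fun t' h' => hts t' (List.mem_cons_of_mem t h')) hA']⟩

end ColouringSearch

section IntegerTriples

open ColouringSearch

def dot3 (u v : ℤ × ℤ × ℤ) : ℤ := u.1 * v.1 + u.2.1 * v.2.1 + u.2.2 * v.2.2

def ofInt3 (u : ℤ × ℤ × ℤ) : EuclideanSpace ℂ (Fin 3) :=
  WithLp.toLp 2 ![(u.1 : ℂ), u.2.1, u.2.2]

theorem inner_ofInt3 (u v : ℤ × ℤ × ℤ) : ⟪ofInt3 u, ofInt3 v⟫_ℂ = dot3 u v := by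
  simp [ofInt3, dot3, PiLp.inner_apply, Fin.sum_univ_three]
  ring

def unitOf (u : ℤ × ℤ × ℤ) : EuclideanSpace ℂ (Fin 3) := (‖ofInt3 u‖⁻¹ : ℂ) • ofInt3 u

theorem norm_unitOf {u : ℤ × ℤ × ℤ} (hu : dot3 u u ≠ 0) : ‖unitOf u‖ = 1 := by
  refine norm_smul_inv_norm fun h => hu ?_
  have := inner_ofInt3 u u
  rw [h, inner_zero_left] at this
  exact_mod_cast this.symm

theorem inner_unitOf_eq_zero {u v : ℤ × ℤ × ℤ} (huv : dot3 u v = 0) :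
    ⟪unitOf u, unitOf v⟫_ℂ = 0 := by
  simp [unitOf, inner_ofInt3, huv]

open Classical in
def unitVectors (L : List (Fin 3 → ℤ × ℤ × ℤ)) : Finset (EuclideanSpace ℂ (Fin 3)) :=
  L.toFinset.biUnion fun t => Finset.univ.image (unitOf ∘ t)

theorem unitOf_mem_unitVectors {L : List (Fin 3 → ℤ × ℤ × ℤ)} {t : Fin 3 → ℤ × ℤ × ℤ}
    (ht : t ∈ L) (k : Fin 3) : unitOf (t k) ∈ unitVectors L := by
  simp only [unitVectors, Finset.mem_biUnion, Finset.mem_image]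
  exact ⟨t, List.mem_toFinset.2 ht, k, Finset.mem_univ k, rfl⟩

def KSWitness.ofIntTriples (L : List (Fin 3 → ℤ × ℤ × ℤ))
    (hself : ∀ t ∈ L, ∀ k, dot3 (t k) (t k) ≠ 0)
    (horth : ∀ t ∈ L, ∀ i j, i ≠ j → dot3 (t i) (t j) = 0)
    (hsearch : search (fun u v => dot3 u v == 0) L [] = false) :
    KSWitness (EuclideanSpace ℂ (Fin 3)) (Fin 3) where
  S := unitVectors L
  bases := {β | ∃ t ∈ L, β = unitOf ∘ t}
  norm_eq_one v hv := by
    simp only [unitVectors, Finset.mem_biUnion, Finset.mem_image] at hv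
    obtain ⟨t, ht, k, -, rfl⟩ := hv
    exact norm_unitOf (hself t (List.mem_toFinset.1 ht) k)
  orthonormal := by
    rintro _ ⟨t, ht, rfl⟩
    exact ⟨fun k => norm_unitOf (hself t ht k),
      fun i j hij => inner_unitOf_eq_zero (horth t ht i j hij)⟩
  mem := by
    rintro _ ⟨t, ht, rfl⟩ k
    exact unitOf_mem_unitVectors ht k
  not_isBasisColouring c := by
    rintro ⟨hbases, hc⟩
    classical
    -- Vanishing off `unitVectors L`, `cInt` meets the orthogonality constraint everywhere.
    let cInt : ℤ × ℤ × ℤ → Bool := fun u => decide (unitOf u ∈ unitVectors L ∧ c (unitOf u))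
    refine Bool.false_ne_true (hsearch ▸ search_eq_true (c := cInt) ?_ ?_ (A := []) ?_)
    · intro u v huv ⟨hu, hv⟩
      simp only [cInt, decide_eq_true_eq] at hu hv
      exact hc _ hu.1 _ hv.1 (inner_unitOf_eq_zero (by simpa using huv)) ⟨hu.2, hv.2⟩
    · intro t ht
      simpa [cInt, unitOf_mem_unitVectors ht] using hbases _ ⟨t, ht, rfl⟩
    · simp [Agrees]

/-- 31 vectors with entries in `{0, ±1, ±2}`, found by computer search; the order of the
triples keeps the backtracking search small. -/
def integerKSTriples : List (Fin 3 → ℤ × ℤ × ℤ) := [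
  ![(1, -1, -1), (1, 0, 1), (1, 2, -1)],
  ![(0, 1, -1), (1, -1, -1), (2, 1, 1)],
  ![(0, 1, -1), (1, 1, 1), (2, -1, -1)],
  ![(1, -2, 1), (1, 0, -1), (1, 1, 1)],
  ![(0, 1, 0), (1, 0, -1), (1, 0, 1)],
  ![(0, 0, 1), (0, 1, 0), (1, 0, 0)],
  ![(0, 1, -1), (0, 1, 1), (1, 0, 0)],
  ![(0, 0, 1), (1, 2, 0), (2, -1, 0)],
  ![(0, 0, 1), (1, -1, 0), (1, 1, 0)],
  ![(1, -1, 0), (1, 1, -1), (1, 1, 2)],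
  ![(0, 1, 1), (1, 1, -1), (2, -1, 1)],
  ![(0, 1, 2), (0, 2, -1), (1, 0, 0)],
  ![(0, 0, 1), (1, -2, 0), (2, 1, 0)],
  ![(1, -1, -2), (1, -1, 1), (1, 1, 0)],
  ![(0, 1, 1), (1, -1, 1), (2, 1, -1)],
  ![(0, 1, 0), (1, 0, 2), (2, 0, -1)],
  ![(0, 1, 0), (1, 0, -2), (2, 0, 1)]]

def integerKSWitness : KSWitness (EuclideanSpace ℂ (Fin 3)) (Fin 3) :=
  KSWitness.ofIntTriples integerKSTriples (by decide) (by decide) (by decide)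

end IntegerTriples

section DimensionStep

variable {E F : Type*} [NormedAddCommGroup E] [InnerProductSpace ℂ E]
  [NormedAddCommGroup F] [InnerProductSpace ℂ F]

theorem Fin.existsUnique_castSucc_of_not_last {m : ℕ} {p : Fin (m + 1) → Prop}
    (h : ∃! k, p k) (hlast : ¬p (Fin.last m)) : ∃! j : Fin m, p j.castSucc := by
  obtain ⟨k, hk, huniq⟩ := h
  induction k using Fin.lastCases with
  | last => exact absurd hk hlast
  | cast j => exact ⟨j, hk, fun j' hj' => Fin.castSucc_injective _ (huniq _ hj')⟩

theorem Orthonormal.snoc {m : ℕ} {β : Fin m → E} (hβ : Orthonormal ℂ β) {a : E}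
    (ha : ‖a‖ = 1) (hβa : ∀ j, ⟪β j, a⟫_ℂ = 0) :
    Orthonormal ℂ (Fin.snoc β a : Fin (m + 1) → E) := by
  refine ⟨fun i => ?_, fun i j hij => ?_⟩
  · induction i using Fin.lastCases <;> simp [ha, hβ.1]
  · induction i using Fin.lastCases <;> induction j using Fin.lastCases
    · exact absurd rfl hij
    · simpa [inner_eq_zero_symm] using hβa _
    · simpa using hβa _
    · simpa using hβ.2 (fun h => hij (by rw [h]))

theorem IsBasisColouring.apply_of_snoc {m : ℕ} (W : KSWitness E (Fin m)) {f : E → F}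
    (hf : ∀ v w, ⟪f v, f w⟫_ℂ = ⟪v, w⟫_ℂ) {a : F} {S : Set F} {𝓑 : Set (Fin (m + 1) → F)}
    (hS : Set.MapsTo f W.S S) (h𝓑 : ∀ β ∈ W.bases, (Fin.snoc (f ∘ β) a : _ → F) ∈ 𝓑)
    {c : F → Prop} (hc : IsBasisColouring S 𝓑 c) : c a := by
  by_contra ha
  refine W.not_isBasisColouring (fun v => c (f v)) ⟨fun β hβ => ?_, hc.2.comp hf hS⟩
  simpa using Fin.existsUnique_castSucc_of_not_last (hc.1 _ (h𝓑 β hβ)) (by simpa using ha)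

def KSWitness.snoc [DecidableEq F] {m : ℕ} (W : KSWitness E (Fin m)) (f g : E → F)
    (hf : ∀ v w, ⟪f v, f w⟫_ℂ = ⟪v, w⟫_ℂ) (hg : ∀ v w, ⟪g v, g w⟫_ℂ = ⟪v, w⟫_ℂ) (a b : F)
    (ha : ‖a‖ = 1) (hb : ‖b‖ = 1) (hab : ⟪a, b⟫_ℂ = 0) (hfa : ∀ v, ⟪f v, a⟫_ℂ = 0)
    (hgb : ∀ v, ⟪g v, b⟫_ℂ = 0) : KSWitness F (Fin (m + 1)) where
  S := W.S.image f ∪ W.S.image g ∪ {a, b}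
  bases := (fun β => Fin.snoc (f ∘ β) a) '' W.bases ∪ (fun β => Fin.snoc (g ∘ β) b) '' W.bases
  norm_eq_one v hv := by
    simp only [Finset.mem_union, Finset.mem_image, Finset.mem_insert,
      Finset.mem_singleton] at hv
    rcases hv with (⟨w, hw, rfl⟩ | ⟨w, hw, rfl⟩) | rfl | rfl
    · rw [norm_map_of_inner_map_map hf, W.norm_eq_one w hw]
    · rw [norm_map_of_inner_map_map hg, W.norm_eq_one w hw]
    · exact ha
    · exact hb
  orthonormal := by
    rintro _ (⟨β, hβ, rfl⟩ | ⟨β, hβ, rfl⟩)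
    · exact ((W.orthonormal β hβ).comp_of_inner_map_map hf).snoc ha fun j => hfa _
    · exact ((W.orthonormal β hβ).comp_of_inner_map_map hg).snoc hb fun j => hgb _
  mem := by
    rintro _ (⟨β, hβ, rfl⟩ | ⟨β, hβ, rfl⟩) k <;> induction k using Fin.lastCases
    · simp
    · simp only [Fin.snoc_castSucc, Function.comp_apply]
      exact Finset.mem_union_left _
        (Finset.mem_union_left _ (Finset.mem_image_of_mem f (W.mem β hβ _)))
    · simp
    · simp only [Fin.snoc_castSucc, Function.comp_apply]
      exact Finset.mem_union_left _
        (Finset.mem_union_right _ (Finset.mem_image_of_mem g (W.mem β hβ _)))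
  not_isBasisColouring c hc := by
    refine hc.2 a (by simp) b (by simp) hab ⟨?_, ?_⟩
    · refine hc.apply_of_snoc W hf (fun v hv => ?_) fun β hβ => Or.inl ⟨β, hβ, rfl⟩
      exact Finset.mem_union_left _ (Finset.mem_union_left _ (Finset.mem_image_of_mem f hv))
    · refine hc.apply_of_snoc W hg (fun v hv => ?_) fun β hβ => Or.inr ⟨β, hβ, rfl⟩
      exact Finset.mem_union_left _ (Finset.mem_union_right _ (Finset.mem_image_of_mem g hv))

variable {m : ℕ}

def padLast (v : EuclideanSpace ℂ (Fin m)) : EuclideanSpace ℂ (Fin (m + 1)) :=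
  WithLp.toLp 2 (Fin.snoc (α := fun _ => ℂ) v 0)

def padFirst (v : EuclideanSpace ℂ (Fin m)) : EuclideanSpace ℂ (Fin (m + 1)) :=
  WithLp.toLp 2 (Fin.cons (α := fun _ => ℂ) 0 v)

theorem inner_padLast (v w : EuclideanSpace ℂ (Fin m)) :
    ⟪padLast v, padLast w⟫_ℂ = ⟪v, w⟫_ℂ := by
  simp [padLast, PiLp.inner_apply, Fin.sum_univ_castSucc]

theorem inner_padFirst (v w : EuclideanSpace ℂ (Fin m)) :
    ⟪padFirst v, padFirst w⟫_ℂ = ⟪v, w⟫_ℂ := by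
  simp [padFirst, PiLp.inner_apply, Fin.sum_univ_succ]

theorem inner_padLast_single_last (v : EuclideanSpace ℂ (Fin m)) :
    ⟪padLast v, EuclideanSpace.single (Fin.last m) (1 : ℂ)⟫_ℂ = 0 := by
  simp [EuclideanSpace.inner_single_right, padLast]

theorem inner_padFirst_single_zero (v : EuclideanSpace ℂ (Fin m)) :
    ⟪padFirst v, EuclideanSpace.single 0 (1 : ℂ)⟫_ℂ = 0 := by
  simp [EuclideanSpace.inner_single_right, padFirst]

open Classical in
theorem nonempty_ksWitness (hm : 3 ≤ m) :
    Nonempty (KSWitness (EuclideanSpace ℂ (Fin m)) (Fin m)) := by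
  induction m, hm using Nat.le_induction with
  | base => exact ⟨integerKSWitness⟩
  | succ m hm ih =>
    refine ⟨ih.some.snoc padLast padFirst inner_padLast inner_padFirst _ _ (by simp) (by simp)
      ?_ inner_padLast_single_last inner_padFirst_single_zero⟩
    rw [EuclideanSpace.inner_single_left, PiLp.single_apply, if_neg]
    · simp
    · exact fun h => by simp [Fin.ext_iff] at h; omega

end DimensionStep

section Tensor

variable {n : ℕ} {d : Fin n → ℕ}

theorem inner_tensD (ψ χ : (j : Fin n) → EuclideanSpace ℂ (Fin (d j))) :
    ⟪tensD ψ, tensD χ⟫_ℂ = ∏ j, ⟪ψ j, χ j⟫_ℂ := by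
  simp only [tensD, PiLp.inner_apply, RCLike.inner_apply, map_prod, ← Finset.prod_mul_distrib]
  rw [Finset.prod_univ_sum, Fintype.piFinset_univ]

def tensBasis (b : (j : Fin n) → Fin (d j) → EuclideanSpace ℂ (Fin (d j)))
    (x : (j : Fin n) → Fin (d j)) : EuclideanSpace ℂ ((j : Fin n) → Fin (d j)) :=
  tensD fun j => b j (x j)

theorem orthonormal_tensBasis {b : (j : Fin n) → Fin (d j) → EuclideanSpace ℂ (Fin (d j))}
    (hb : ∀ j, Orthonormal ℂ (b j)) : Orthonormal ℂ (tensBasis b) := by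
  classical
  rw [orthonormal_iff_ite]
  intro x y
  simp only [tensBasis, inner_tensD, orthonormal_iff_ite.1 (hb _)]
  by_cases h : x = y
  · simp [h]
  · obtain ⟨j, hj⟩ := Function.ne_iff.1 h
    rw [if_neg h]
    exact Finset.prod_eq_zero (Finset.mem_univ j) (if_neg hj)

theorem isDirectProductBasis_image_tensBasis
    [DecidableEq (EuclideanSpace ℂ ((j : Fin n) → Fin (d j)))]
    {b : (j : Fin n) → Fin (d j) → EuclideanSpace ℂ (Fin (d j))}
    (hb : ∀ j, Orthonormal ℂ (b j)) : IsDirectProductBasis (Finset.univ.image (tensBasis b)) :=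
  ⟨b, hb, by rw [Finset.coe_image, Finset.coe_univ, Set.image_univ]; rfl⟩

variable (j₀ : Fin n)

def embedAt (x : (j : Fin n) → Fin (d j)) (v : EuclideanSpace ℂ (Fin (d j₀))) :
    EuclideanSpace ℂ ((j : Fin n) → Fin (d j)) :=
  tensD (Function.update (fun j => EuclideanSpace.basisFun (Fin (d j)) ℂ (x j)) j₀ v)

variable {j₀}

theorem embedAt_congr {x y : (j : Fin n) → Fin (d j)} (h : ∀ j ≠ j₀, x j = y j) :
    embedAt j₀ x = embedAt j₀ y := by
  funext v
  unfold embedAt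
  congr 1
  funext j
  rcases eq_or_ne j j₀ with rfl | hj
  · simp
  · simp [hj, h j hj]

theorem inner_embedAt (x : (j : Fin n) → Fin (d j)) (v w : EuclideanSpace ℂ (Fin (d j₀))) :
    ⟪embedAt j₀ x v, embedAt j₀ x w⟫_ℂ = ⟪v, w⟫_ℂ := by
  rw [embedAt, embedAt, inner_tensD, Fintype.prod_eq_single j₀ fun j hj => ?_]
  · simp
  · simp [hj]

theorem inner_embedAt_eq_zero {x y : (j : Fin n) → Fin (d j)} {j : Fin n} (hj : j ≠ j₀)
    (hxy : x j ≠ y j) (v w : EuclideanSpace ℂ (Fin (d j₀))) :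
    ⟪embedAt j₀ x v, embedAt j₀ y w⟫_ℂ = 0 := by
  rw [embedAt, embedAt, inner_tensD]
  refine Finset.prod_eq_zero (Finset.mem_univ j) ?_
  simpa [hj] using (EuclideanSpace.basisFun _ ℂ).orthonormal.2 hxy

def liftBasis (β : Fin (d j₀) → EuclideanSpace ℂ (Fin (d j₀))) :
    ((j : Fin n) → Fin (d j)) → EuclideanSpace ℂ ((j : Fin n) → Fin (d j)) :=
  tensBasis (Function.update (fun j => ⇑(EuclideanSpace.basisFun (Fin (d j)) ℂ)) j₀ β)

theorem liftBasis_apply (β : Fin (d j₀) → EuclideanSpace ℂ (Fin (d j₀)))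
    (x : (j : Fin n) → Fin (d j)) : liftBasis β x = embedAt j₀ x (β (x j₀)) := by
  unfold liftBasis tensBasis embedAt
  congr 1
  funext j
  exact Function.apply_update (fun j (b : Fin (d j) → EuclideanSpace ℂ (Fin (d j))) => b (x j))
    (fun j => ⇑(EuclideanSpace.basisFun (Fin (d j)) ℂ)) j₀ β j

theorem orthonormal_update_basisFun {β : Fin (d j₀) → EuclideanSpace ℂ (Fin (d j₀))}
    (hβ : Orthonormal ℂ β) (j : Fin n) :
    Orthonormal ℂ
      (Function.update (fun j => ⇑(EuclideanSpace.basisFun (Fin (d j)) ℂ)) j₀ β j) := by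
  rcases eq_or_ne j j₀ with rfl | hj
  · simpa using hβ
  · simp [hj]

open Classical in
def liftSet (S : Finset (EuclideanSpace ℂ (Fin (d j₀)))) :
    Finset (EuclideanSpace ℂ ((j : Fin n) → Fin (d j))) :=
  (S ×ˢ Finset.univ).image fun p => embedAt j₀ p.2 p.1

theorem embedAt_mem_liftSet {S : Finset (EuclideanSpace ℂ (Fin (d j₀)))} {v}
    (hv : v ∈ S) (x : (j : Fin n) → Fin (d j)) : embedAt j₀ x v ∈ liftSet S :=
  Finset.mem_image.2 ⟨(v, x), Finset.mem_product.2 ⟨hv, Finset.mem_univ x⟩, rfl⟩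

theorem exists_eq_tensD_of_mem_liftSet {S : Finset (EuclideanSpace ℂ (Fin (d j₀)))}
    {w} (hw : w ∈ liftSet S) : ∃ ψ, w = tensD ψ := by
  obtain ⟨p, -, rfl⟩ := Finset.mem_image.1 hw
  exact ⟨_, rfl⟩

theorem IsBasisColouring.exists_slice
    (W : KSWitness (EuclideanSpace ℂ (Fin (d j₀))) (Fin (d j₀)))
    {c : EuclideanSpace ℂ ((j : Fin n) → Fin (d j)) → Prop}
    (hc : IsBasisColouring (liftSet W.S : Set _) (liftBasis '' W.bases) c) :
    ∃ x₀ : (j : Fin n) → Fin (d j),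
      ∀ β ∈ W.bases, ∀ x, c (liftBasis β x) → ∀ j ≠ j₀, x j = x₀ j := by
  obtain ⟨β₀, hβ₀⟩ := W.bases_nonempty
  obtain ⟨x₀, hx₀, -⟩ := hc.1 _ ⟨β₀, hβ₀, rfl⟩
  refine ⟨x₀, fun β hβ x hx j hj => by_contra fun hne => hc.2 _ ?_ _ ?_ ?_ ⟨hx, hx₀⟩⟩
  · rw [liftBasis_apply]; exact embedAt_mem_liftSet (W.mem β hβ _) x
  · rw [liftBasis_apply]; exact embedAt_mem_liftSet (W.mem β₀ hβ₀ _) x₀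
  · rw [liftBasis_apply, liftBasis_apply]; exact inner_embedAt_eq_zero hj hne _ _

theorem not_isBasisColouring_lift
    (W : KSWitness (EuclideanSpace ℂ (Fin (d j₀))) (Fin (d j₀)))
    (c : EuclideanSpace ℂ ((j : Fin n) → Fin (d j)) → Prop) :
    ¬IsBasisColouring (liftSet W.S : Set _) (liftBasis '' W.bases) c := by
  intro hc
  obtain ⟨x₀, hx₀⟩ := hc.exists_slice W
  refine W.not_isBasisColouring (fun v => c (embedAt j₀ x₀ v))
    ⟨fun β hβ => ?_, hc.2.comp (inner_embedAt x₀) fun v hv => embedAt_mem_liftSet hv x₀⟩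
  obtain ⟨x, hx, huniq⟩ := hc.1 _ ⟨β, hβ, rfl⟩
  have hslice : ∀ k, liftBasis β (Function.update x₀ j₀ k) = embedAt j₀ x₀ (β k) := fun k => by
    rw [liftBasis_apply, Function.update_self]
    exact congrFun (embedAt_congr fun j hj => Function.update_of_ne hj k x₀) _
  refine ⟨x j₀, ?_, fun k hk => ?_⟩
  · show c (embedAt j₀ x₀ (β (x j₀)))
    rwa [embedAt_congr fun j hj => (hx₀ β hβ x hx j hj).symm, ← liftBasis_apply]
  · have hk' : c (liftBasis β (Function.update x₀ j₀ k)) := by rw [hslice]; exact hk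
    rw [← huniq _ hk', Function.update_self]

def KSWitness.lift (W : KSWitness (EuclideanSpace ℂ (Fin (d j₀))) (Fin (d j₀))) :
    KSWitness (EuclideanSpace ℂ ((j : Fin n) → Fin (d j))) ((j : Fin n) → Fin (d j)) where
  S := liftSet W.S
  bases := liftBasis '' W.bases
  norm_eq_one w hw := by
    obtain ⟨⟨v, x⟩, hvx, rfl⟩ := Finset.mem_image.1 hw
    rw [norm_map_of_inner_map_map (inner_embedAt x),
      W.norm_eq_one v (Finset.mem_product.1 hvx).1]
  orthonormal := by
    rintro _ ⟨β, hβ, rfl⟩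
    exact orthonormal_tensBasis (orthonormal_update_basisFun (W.orthonormal β hβ))
  mem := by
    rintro _ ⟨β, hβ, rfl⟩ x
    rw [liftBasis_apply]
    exact embedAt_mem_liftSet (W.mem β hβ _) x
  not_isBasisColouring := not_isBasisColouring_lift W

end Tensor

theorem unentangled_KS_set_exists_general
    (n : ℕ) (d : Fin n → ℕ)
    (hd3 : ∃ j, 3 ≤ d j) :
    ∃ S : Finset (EuclideanSpace ℂ ((j : Fin n) → Fin (d j))),
      (∀ v ∈ S, (∃ ψ, v = tensD ψ) ∧ ‖v‖ = 1) ∧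
      (¬ ∃ c : EuclideanSpace ℂ ((j : Fin n) → Fin (d j)) → Prop,
        IsKSColouring (↑S) c) ∧
      (¬ ∃ c : EuclideanSpace ℂ ((j : Fin n) → Fin (d j)) → Prop,
        (∀ B : Finset (EuclideanSpace ℂ ((j : Fin n) → Fin (d j))),
          ↑B ⊆ (S : Set (EuclideanSpace ℂ ((j : Fin n) → Fin (d j)))) →
          IsDirectProductBasis B → ∃! v, v ∈ B ∧ c v) ∧
        (∀ v ∈ S, ∀ w ∈ S, ⟪v, w⟫_ℂ = 0 → ¬(c v ∧ c w))) := by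
  classical
  obtain ⟨j₀, hj₀⟩ := hd3
  obtain ⟨W⟩ := nonempty_ksWitness hj₀
  refine ⟨W.lift.S, fun v hv => ⟨exists_eq_tensD_of_mem_liftSet hv, W.lift.norm_eq_one v hv⟩,
    W.lift.not_colourable fun β hβ => isONBasis_image (W.lift.orthonormal β hβ)
      finrank_euclideanSpace.symm,
    W.lift.not_colourable ?_⟩
  rintro _ ⟨β, hβ, rfl⟩
  exact isDirectProductBasis_image_tensBasis (orthonormal_update_basisFun (W.orthonormal β hβ))

/-- unentangled KS sets given a subsystem of dimension ≥ 3: if every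
factor has dimension at least `2` and some factor has dimension at least `3`, then there
is a finite set `S` of product unit vectors in `H₁ ⊗ ⋯ ⊗ Hₙ` admitting no KS-colouring;
moreover already the direct product bases contained in `S` witness uncolourability. -/
theorem unentangled_KS_set_exists
    (n : ℕ) (hn : 1 ≤ n) (d : Fin n → ℕ)
    (hd2 : ∀ j, 2 ≤ d j) (hd3 : ∃ j, 3 ≤ d j) :
    ∃ S : Finset (EuclideanSpace ℂ ((j : Fin n) → Fin (d j))),
      (∀ v ∈ S, (∃ ψ, v = tensD ψ) ∧ ‖v‖ = 1) ∧
      (¬ ∃ c : EuclideanSpace ℂ ((j : Fin n) → Fin (d j)) → Prop,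
        IsKSColouring (↑S) c) ∧
      (¬ ∃ c : EuclideanSpace ℂ ((j : Fin n) → Fin (d j)) → Prop,
        (∀ B : Finset (EuclideanSpace ℂ ((j : Fin n) → Fin (d j))),
          ↑B ⊆ (S : Set (EuclideanSpace ℂ ((j : Fin n) → Fin (d j)))) →
          IsDirectProductBasis B → ∃! v, v ∈ B ∧ c v) ∧
        (∀ v ∈ S, ∀ w ∈ S, ⟪v, w⟫_ℂ = 0 → ¬(c v ∧ c w))) :=
  unentangled_KS_set_exists_general n d hd3

end
end

section
/- Gluing lemma for KS-uncolourable sets in ℂ⁴: let {e₁, e₂, e₃, e₄} be an orthonormal basis of a four-dimensional complex Hilbert space H. Let A be a finite set of unit vectors lying in the orthogonal complement of e₁, and B a finite set of unit vectors lying in the orthogonal complement of e₂, such that A admits no map c_A : A → {0,1} with exactly one element of c_A-value 1 in every orthonormal basis of e₁^⊥ contained in A, and similarly B admits no such map for orthonormal bases of e₂^⊥ contained in B. Then the set S = {e₁, e₂, e₃, e₄} ∪ A ∪ B admits no map c : S → {0,1} assigning exactly one value 1 to every orthonormal basis of H contained in S; i.e., S is a KS set in H. -/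
/-! If a colouring `c` of `S` gave value `0` to `e 0`, every orthonormal triple `T ⊆ A` would
extend by `e 0` to an orthonormal basis of the whole space inside `S`, whose unique vector of
value `1` lies in `T`; so `c` would colour `A`. Hence `c (e 0)`, and likewise `c (e 1)`: the basis
`{e 0, e 1, e 2, e 3} ⊆ S` then has two vectors of value `1`. -/

open scoped InnerProductSpace
open MeasureTheory

noncomputable section

section

variable {H : Type*} [NormedAddCommGroup H] [InnerProductSpace ℂ H]

lemma isONBasis_of_card_eq_finrank [FiniteDimensional ℂ H] {T : Finset H}
    (hT : Orthonormal ℂ (fun v : T => (v : H))) (hcard : T.card = Module.finrank ℂ H) :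
    IsONBasis T :=
  ⟨hT, by simpa using hT.linearIndependent.span_eq_top_of_card_eq_finrank' (by simpa using hcard)⟩

lemma isONBasis_image_univ [FiniteDimensional ℂ H] {ι : Type*} [Fintype ι] [DecidableEq H]
    {e : ι → H} (he : Orthonormal ℂ e) (hcard : Fintype.card ι = Module.finrank ℂ H) :
    IsONBasis (Finset.univ.image e) := by
  refine isONBasis_of_card_eq_finrank ?_ ?_
  · have hrange : ((Finset.univ.image e : Finset H) : Set H) = Set.range e := by simp
    have := (orthonormal_subtype_range he.linearIndependent.injective).mpr he
    rw [← hrange] at this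
    exact this
  · rw [Finset.card_image_of_injective _ he.linearIndependent.injective, Finset.card_univ, hcard]

lemma orthonormal_insert_of_orthogonal [DecidableEq H] {x : H} {T : Finset H} (hx : ‖x‖ = 1)
    (hT : Orthonormal ℂ (fun v : T => (v : H))) (hxT : ∀ v ∈ T, ⟪x, v⟫_ℂ = 0) :
    Orthonormal ℂ (fun v : (insert x T : Finset H) => (v : H)) := by
  have hT' := orthonormal_subtype_iff_ite.mp hT
  refine orthonormal_subtype_iff_ite.mpr ?_
  have hxnT : x ∉ T := fun h => by simpa [hx] using hxT x h
  simp only [Finset.coe_insert, Set.mem_insert_iff, Finset.mem_coe]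
  rintro v (rfl | hv) w (rfl | hw)
  · simp [hx]
  · rw [hxT w hw, if_neg (by rintro rfl; exact hxnT hw)]
  · rw [inner_eq_zero_symm.mp (hxT v hv), if_neg (by rintro rfl; exact hxnT hv)]
  · exact hT' v hv w hw

lemma colour_of_orthogonal_uncolourable [FiniteDimensional ℂ H] {S F : Set H} {c : H → Prop}
    (hc : ∀ T : Finset H, ↑T ⊆ S → IsONBasis T → ∃! v, v ∈ T ∧ c v)
    {x : H} (hx : ‖x‖ = 1) (hxS : x ∈ S) (hFS : F ⊆ S) (hxF : ∀ v ∈ F, ⟪x, v⟫_ℂ = 0)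
    {n : ℕ} (hn : Module.finrank ℂ H = n + 1)
    (hFnc : ¬ ∃ cF : H → Prop, ∀ T : Finset H, ↑T ⊆ F →
      Orthonormal ℂ (fun v : T => (v : H)) → T.card = n → ∃! v, v ∈ T ∧ cF v) :
    c x := by
  classical
  by_contra hcx
  refine hFnc ⟨c, fun T hTF hTo hTcard => ?_⟩
  have hxT : ∀ v ∈ T, ⟪x, v⟫_ℂ = 0 := fun v hv => hxF v (hTF hv)
  have hxnT : x ∉ T := fun h => by simpa [hx] using hxT x h
  have hbasis : IsONBasis (insert x T) :=
    isONBasis_of_card_eq_finrank (orthonormal_insert_of_orthogonal hx hTo hxT)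
      (by rw [Finset.card_insert_of_notMem hxnT, hTcard, hn])
  have hsub : ↑(insert x T) ⊆ S := by
    rw [Finset.coe_insert]
    exact Set.insert_subset hxS (hTF.trans hFS)
  obtain ⟨v, ⟨hvxT, hcv⟩, huniq⟩ := hc _ hsub hbasis
  have hvT : v ∈ T := (Finset.mem_insert.mp hvxT).resolve_left (by rintro rfl; exact hcx hcv)
  exact ⟨v, ⟨hvT, hcv⟩, fun w hw => huniq w ⟨Finset.mem_insert_of_mem hw.1, hw.2⟩⟩

end

/-- gluing lemma for KS-uncolourable sets in `ℂ⁴`: let `{e 0, …, e 3}` be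
an orthonormal basis of a four-dimensional Hilbert space, `A` a finite set of unit
vectors orthogonal to `e 0` and `B` a finite set of unit vectors orthogonal to `e 1`,
each admitting no `{0,1}`-colouring with exactly one value `1` on every orthonormal
basis of the respective orthogonal complement (a triple of orthonormal vectors)
contained in it.  Then `S = {e 0, e 1, e 2, e 3} ∪ A ∪ B` admits no `{0,1}`-colouring
with exactly one value `1` on every orthonormal basis of the whole space contained in
`S`; i.e. `S` is a KS set. -/
theorem gluing_KS_uncolourable
    (e : Fin 4 → EuclideanSpace ℂ (Fin 4)) (he : Orthonormal ℂ e)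
    (A B : Finset (EuclideanSpace ℂ (Fin 4)))
    (hA : ∀ a ∈ A, ‖a‖ = 1 ∧ ⟪e 0, a⟫_ℂ = 0)
    (hB : ∀ b ∈ B, ‖b‖ = 1 ∧ ⟪e 1, b⟫_ℂ = 0)
    (hAnc : ¬ ∃ cA : EuclideanSpace ℂ (Fin 4) → Prop,
      ∀ T : Finset (EuclideanSpace ℂ (Fin 4)), ↑T ⊆ (A : Set (EuclideanSpace ℂ (Fin 4))) →
        Orthonormal ℂ (fun v : T => (v : EuclideanSpace ℂ (Fin 4))) → T.card = 3 →
        ∃! v, v ∈ T ∧ cA v)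
    (hBnc : ¬ ∃ cB : EuclideanSpace ℂ (Fin 4) → Prop,
      ∀ T : Finset (EuclideanSpace ℂ (Fin 4)), ↑T ⊆ (B : Set (EuclideanSpace ℂ (Fin 4))) →
        Orthonormal ℂ (fun v : T => (v : EuclideanSpace ℂ (Fin 4))) → T.card = 3 →
        ∃! v, v ∈ T ∧ cB v)
    (S : Set (EuclideanSpace ℂ (Fin 4)))
    (hS : S = {e 0, e 1, e 2, e 3} ∪ ↑A ∪ ↑B) :
    ¬ ∃ c : EuclideanSpace ℂ (Fin 4) → Prop,
      ∀ T : Finset (EuclideanSpace ℂ (Fin 4)), ↑T ⊆ S → IsONBasis T →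
        ∃! v, v ∈ T ∧ c v := by
  classical
  rintro ⟨c, hc⟩
  subst hS
  have hn : Module.finrank ℂ (EuclideanSpace ℂ (Fin 4)) = 3 + 1 := by simp
  have hc0 : c (e 0) := colour_of_orthogonal_uncolourable hc (he.1 0) (by simp)
    (Set.subset_union_of_subset_left Set.subset_union_right _) (fun a ha => (hA a ha).2) hn hAnc
  have hc1 : c (e 1) := colour_of_orthogonal_uncolourable hc (he.1 1) (by simp)
    Set.subset_union_right (fun b hb => (hB b hb).2) hn hBnc
  have hbasisS : (↑(Finset.univ.image e) : Set _) ⊆ {e 0, e 1, e 2, e 3} ∪ ↑A ∪ ↑B := by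
    intro v hv
    obtain ⟨i, -, rfl⟩ := Finset.mem_image.mp hv
    fin_cases i <;> simp
  obtain ⟨v, -, huniq⟩ := hc _ hbasisS (isONBasis_image_univ he (by simp))
  have h01 : e 0 = e 1 := (huniq _ ⟨by simp, hc0⟩).trans (huniq _ ⟨by simp, hc1⟩).symm
  exact absurd (he.linearIndependent.injective h01) (by decide)

end
end
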